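/- For λ, μ ∈ ℂ, the 3-dimensional algebras N_λ with products e₁e₁ = e₂, e₃e₃ = e₂, e₁e₃ = λe₂, e₃e₁ = -λe₂ and N_μ (same with μ in place of λ) are isomorphic if and only if μ = λ or μ = -λ. -/
import Mathlib


/-- Multiplication of N_λ: e₁e₁ = e₂, e₃e₃ = e₂, e₁e₃ = λe₂, e₃e₁ = -λe₂. -/
def mulN (l : ℂ) (v w : Fin 3 → ℂ) : Fin 3 → ℂ :=
  ![0, v 0 * w 0 + v 2 * w 2 + l * (v 0 * w 2 - v 2 * w 0), 0]

/-- N_λ ≅ N_μ iff μ = λ or μ = -λ. -/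
theorem stmt_12 (l m : ℂ) :
    (∃ f : (Fin 3 → ℂ) ≃ₗ[ℂ] (Fin 3 → ℂ),
        ∀ x y, f (mulN l x y) = mulN m (f x) (f y)) ↔ (m = l ∨ m = -l) := by
  constructor
  · rintro ⟨f, hf⟩
    set E1 : Fin 3 → ℂ := ![1,0,0] with hE1
    set E2 : Fin 3 → ℂ := ![0,1,0] with hE2
    set E3 : Fin 3 → ℂ := ![0,0,1] with hE3
    have m11 : mulN l E1 E1 = E2 := by
      funext i; fin_cases i <;> simp [mulN, hE1, hE2]
    have m33 : mulN l E3 E3 = E2 := by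
      funext i; fin_cases i <;> simp [mulN, hE3, hE2]
    have m13 : mulN l E1 E3 = l • E2 := by
      funext i; fin_cases i <;> simp [mulN, hE1, hE3, hE2]
    have m31 : mulN l E3 E1 = (-l) • E2 := by
      funext i; fin_cases i <;> simp [mulN, hE1, hE3, hE2]
    set a := f E1 0 with ha
    set b := f E1 2 with hb
    set d := f E3 0 with hd
    set e := f E3 2 with he
    have k11 := hf E1 E1
    rw [m11] at k11
    have k33 := hf E3 E3
    rw [m33] at k33
    have k13 := hf E1 E3
    rw [m13, map_smul] at k13
    have k31 := hf E3 E1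
    rw [m31, map_smul] at k31
    set c := f E2 1 with hc
    -- component equations at index 1
    have q11 : c = a * a + b * b + m * (a * b - b * a) := congrFun k11 1
    have q33 : c = d * d + e * e + m * (d * e - e * d) := congrFun k33 1
    have q13 : l * c = a * d + b * e + m * (a * e - b * d) := congrFun k13 1
    have q31 : -l * c = d * a + e * b + m * (d * b - e * a) := congrFun k31 1
    have hc0 : f E2 0 = 0 := congrFun k11 0
    have hc2 : f E2 2 = 0 := congrFun k11 2
    have hcne : c ≠ 0 := by
      intro h
      have : f E2 = f 0 := by
        funext i; fin_cases i <;> simp [hc0, hc2, ← hc, h]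
      have := f.injective this
      have := congrFun this 1
      simp [hE2] at this
    -- algebra
    have hsum : a * d + b * e = 0 := by linear_combination -(q13 + q31) / 2
    have hdiff : c * l = m * (a * e - b * d) := by linear_combination (q13 - q31) / 2
    have hq11 : c = a ^ 2 + b ^ 2 := by linear_combination q11
    have hq33 : c = d ^ 2 + e ^ 2 := by linear_combination q33
    have hdet : (a * e - b * d) ^ 2 = c ^ 2 := by
      linear_combination (-(d^2) - e^2) * hq11 - c * hq33 - (a*d + b*e) * hsum
    have key : c ^ 2 * ((m - l) * (m + l)) = 0 := by
      linear_combination -(m ^ 2) * hdet - (m * (a * e - b * d) + c * l) * hdiff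
    have := mul_eq_zero.mp key
    rcases this with h | h
    · exact absurd h (pow_ne_zero 2 hcne)
    · rcases mul_eq_zero.mp h with h | h
      · left; exact sub_eq_zero.mp h
      · right; exact eq_neg_of_add_eq_zero_left h
  · rintro (rfl | rfl)
    · exact ⟨LinearEquiv.refl ℂ _, fun x y => rfl⟩
    · refine ⟨LinearEquiv.funCongrLeft ℂ ℂ (Equiv.swap (0:Fin 3) 2), fun x y => ?_⟩
      funext i
      fin_cases i <;>
        simp [mulN, LinearEquiv.funCongrLeft, Equiv.swap_apply_def] <;> ring
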